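/- There exist a finite system T with inputs I and outputs O, a trace π of T, and an effect E ⊆ (ℕ → Set I × Set O) that is a persistence property, such that some C ⊆ (ℕ → Set I) is a cause of E on π in T with respect to the subset similarity relation and C is not a persistence property. -/
import Mathlib


/-- The prefix of length `n` of the infinite word `π`, i.e. the list `[π 0, …, π (n-1)]`. -/
def wordPrefix {A : Type*} (π : ℕ → A) (n : ℕ) : List A := (List.range n).map π

/-- The set of prefixes of length `n` of words in `L`. -/
def prefN {A : Type*} (L : Set (ℕ → A)) (n : ℕ) : Set (List A) :=
  (fun π => wordPrefix π n) '' L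

/-- The set of all prefixes of words in `L`. -/
def prefAll {A : Type*} (L : Set (ℕ → A)) : Set (List A) := ⋃ n, prefN L n

/-- The set of all prefixes of the single word `π`. -/
def prefWord {A : Type*} (π : ℕ → A) : Set (List A) := {w | ∃ n, w = wordPrefix π n}

/-- `f` is prefix-continuous. -/
def PrefixContinuous {A B : Type*} (f : (ℕ → A) → Set (ℕ → B)) : Prop :=
  ∀ (n : ℕ) (π : ℕ → A), ∃ m : ℕ, ∀ π' : ℕ → A,
    wordPrefix π' m = wordPrefix π m → prefN (f π) n = prefN (f π') n

/-- `f` is prefix-closed. -/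
def PrefixClosed {A B : Type*} (f : (ℕ → A) → Set (ℕ → B)) : Prop :=
  ∀ (π : ℕ → A) (σ : ℕ → B), prefWord σ ⊆ prefAll (f π) → σ ∈ f π

/-- `f` is prefix-compact. -/
def PrefixCompact {A B : Type*} (f : (ℕ → A) → Set (ℕ → B)) : Prop :=
  ∀ (n : ℕ) (π : ℕ → A), (prefN (f π) n).Finite

/-- The universal preimage of `S` under `f`. -/
def univPreimage {A B : Type*} (f : (ℕ → A) → Set (ℕ → B)) (S : Set (ℕ → B)) :
    Set (ℕ → A) := {π | f π ⊆ S}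

/-- The existential preimage of `S` under `f`. -/
def existPreimage {A B : Type*} (f : (ℕ → A) → Set (ℕ → B)) (S : Set (ℕ → B)) :
    Set (ℕ → A) := {π | (f π ∩ S).Nonempty}

/-- `L` is a safety property. -/
def IsSafetyProperty {B : Type*} (L : Set (ℕ → B)) : Prop :=
  ∃ Φ : Set (List B), L = {π | ∀ n : ℕ, wordPrefix π n ∈ Φ}

/-- `L` is a guarantee property. -/
def IsGuaranteeProperty {B : Type*} (L : Set (ℕ → B)) : Prop :=
  ∃ Φ : Set (List B), L = {π | ∃ n : ℕ, wordPrefix π n ∈ Φ}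

/-- `L` is a recurrence property. -/
def IsRecurrenceProperty {B : Type*} (L : Set (ℕ → B)) : Prop :=
  ∃ Φ : Set (List B), L = {π | {n : ℕ | wordPrefix π n ∈ Φ}.Infinite}

/-- `L` is a persistence property. -/
def IsPersistenceProperty {B : Type*} (L : Set (ℕ → B)) : Prop :=
  ∃ Φ : Set (List B), L = {π | {n : ℕ | wordPrefix π n ∈ Φ}.Finite}

/-- A (finite-state) reactive system with states `S`, inputs `I` and outputs `O`. -/
structure FinSystem (S I O : Type*) where
  init : S
  tr : S → Set I → Set S
  lab : S → Set O

/-- `π` is a trace of the system `T`. -/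
def IsTrace {S I O : Type*} (T : FinSystem S I O) (π : ℕ → Set I × Set O) : Prop :=
  ∃ s : ℕ → S, s 0 = T.init ∧
    ∀ n : ℕ, s (n + 1) ∈ T.tr (s n) (π n).1 ∧ (π n).2 = T.lab (s (n + 1))

/-- The input component of a trace. -/
def traceInputs {I O : Type*} (π : ℕ → Set I × Set O) : ℕ → Set I := fun n => (π n).1

/-- The subset similarity relation relative to the observed trace `π`:
`σ` is at least as similar to `π` as the input sequence `ρ`. -/
def SubsetSim {I O : Type*} (π σ : ℕ → Set I × Set O) (ρ : ℕ → Set I) : Prop :=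
  ∀ (n : ℕ) (i : I), ((i ∈ (σ n).1) ≠ (i ∈ (π n).1)) → ((i ∈ ρ n) ≠ (i ∈ (π n).1))

/-- The SAT condition. -/
def SatCond {S I O : Type*} (T : FinSystem S I O) (π : ℕ → Set I × Set O)
    (E : Set (ℕ → Set I × Set O)) (C : Set (ℕ → Set I)) : Prop :=
  ∀ π' : ℕ → Set I × Set O, IsTrace T π' → traceInputs π' = traceInputs π →
    traceInputs π' ∈ C ∧ π' ∈ E

/-- The CF condition. -/
def CfCond {S I O : Type*} (T : FinSystem S I O) (π : ℕ → Set I × Set O)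
    (E : Set (ℕ → Set I × Set O)) (C : Set (ℕ → Set I)) : Prop :=
  ∀ ρ : ℕ → Set I, ρ ∉ C → ∃ σ : ℕ → Set I × Set O,
    IsTrace T σ ∧ SubsetSim π σ ρ ∧ σ ∉ E

/-- `C` is a cause of the effect `E` on the trace `π` in the system `T`,
with respect to the subset similarity relation. -/
def IsCause {S I O : Type*} (T : FinSystem S I O) (π : ℕ → Set I × Set O)
    (E : Set (ℕ → Set I × Set O)) (C : Set (ℕ → Set I)) : Prop :=
  SatCond T π E C ∧ CfCond T π E C ∧
    ¬ ∃ C' : Set (ℕ → Set I), C' ⊂ C ∧ SatCond T π E C' ∧ CfCond T π E C'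

section CausalityAux

lemma wordPrefix_length {A : Type*} (π : ℕ → A) (n : ℕ) :
    (wordPrefix π n).length = n := by simp [wordPrefix]

lemma wordPrefix_getElem? {A : Type*} (π : ℕ → A) {n i : ℕ} (h : i < n) :
    (wordPrefix π n)[i]? = some (π i) := by simp [wordPrefix, h]

lemma wordPrefix_getElem?_ge {A : Type*} (π : ℕ → A) {n i : ℕ} (h : n ≤ i) :
    (wordPrefix π n)[i]? = none := by
  rw [List.getElem?_eq_none]; simpa [wordPrefix]

lemma wordPrefix_prefix {A : Type*} (π : ℕ → A) {m n : ℕ} (h : m ≤ n) :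
    wordPrefix π m <+: wordPrefix π n := by
  have : (wordPrefix π n).take m = wordPrefix π m := by
    rw [wordPrefix, wordPrefix, ← List.map_take, List.take_range, min_eq_left h]
  rw [← this]; exact List.take_prefix _ _

lemma wordPrefix_congr {A : Type*} {π π' : ℕ → A} {n : ℕ} (h : ∀ i < n, π i = π' i) :
    wordPrefix π n = wordPrefix π' n := by
  apply List.ext_getElem?; intro i
  rcases lt_or_ge i n with hi | hi
  · rw [wordPrefix_getElem? _ hi, wordPrefix_getElem? _ hi, h i hi]
  · rw [wordPrefix_getElem?_ge _ hi, wordPrefix_getElem?_ge _ hi]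

lemma wordPrefix_of_list {A : Type*} (d : A) (w : List A) :
    wordPrefix (fun n => w.getD n d) w.length = w := by
  apply List.ext_getElem?; intro i
  rcases lt_or_ge i w.length with hi | hi
  · rw [wordPrefix_getElem? _ hi, List.getD_eq_getElem _ _ hi, List.getElem?_eq_getElem hi]
  · rw [wordPrefix_getElem?_ge _ hi, List.getElem?_eq_none (by simpa)]

lemma List.IsPrefix.getD_eq {A : Type*} {l₁ l₂ : List A} (h : l₁ <+: l₂) {i : ℕ}
    (hi : i < l₁.length) (d : A) : l₂.getD i d = l₁.getD i d := by
  rw [List.getD_eq_getElem _ _ hi, List.getD_eq_getElem _ _ (hi.trans_le h.length_le),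
    h.getElem hi]

lemma prop_ne_of {P Q : Prop} (hq : Q) (hp : ¬P) : P ≠ Q := fun h => hp (h ▸ hq)

lemma not_of_prop_ne {P Q : Prop} (hne : P ≠ Q) (hq : Q) : ¬P :=
  fun hp => hne (propext ⟨fun _ => hq, fun _ => hp⟩)

/-- "infinitely often on" is not a persistence property. -/
lemma infiniteOn_not_persistence :
    ¬ ∃ Φ : Set (List (Set Unit)),
      {ρ : ℕ → Set Unit | {n | () ∈ ρ n}.Infinite}
        = {ρ | {n : ℕ | wordPrefix ρ n ∈ Φ}.Finite} := by
  rintro ⟨Φ, hΦ⟩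
  have hiff : ∀ ρ : ℕ → Set Unit,
      {n | () ∈ ρ n}.Infinite ↔ {n : ℕ | wordPrefix ρ n ∈ Φ}.Finite :=
    fun ρ => Set.ext_iff.mp hΦ ρ
  -- Key extension lemma
  have key : ∀ w : List (Set Unit), ∃ w' : List (Set Unit),
      (w ++ [(Set.univ : Set Unit)]) <+: w' ∧ w' ∈ Φ ∧ w.length + 1 < w'.length := by
    intro w
    set u := w ++ [(Set.univ : Set Unit)] with hu
    set ρ := fun n => u.getD n (∅ : Set Unit) with hρ
    have hfin : {n | () ∈ ρ n}.Finite := by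
      apply Set.Finite.subset (Set.finite_Iio u.length)
      intro n hn
      by_contra hge
      simp only [Set.mem_Iio, not_lt] at hge
      have : ρ n = ∅ := List.getD_eq_default _ _ hge
      rw [Set.mem_setOf_eq, this] at hn
      exact hn
    have hinf : ¬ {n : ℕ | wordPrefix ρ n ∈ Φ}.Finite :=
      fun h => hfin.not_infinite ((hiff ρ).mpr h)
    have hinf' : {n : ℕ | wordPrefix ρ n ∈ Φ}.Infinite := hinf
    obtain ⟨n, hnΦ, hlt⟩ := hinf'.exists_gt u.length
    refine ⟨wordPrefix ρ n, ?_, hnΦ, ?_⟩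
    · have h1 : u = wordPrefix ρ u.length := (wordPrefix_of_list ∅ u).symm
      calc u = wordPrefix ρ u.length := h1
        _ <+: wordPrefix ρ n := wordPrefix_prefix ρ hlt.le
    · rw [wordPrefix_length]
      simpa [hu] using hlt
  -- Build the diagonal sequence of prefixes
  let g : ℕ → List (Set Unit) := fun k => Nat.rec [] (fun _ w => (key w).choose) k
  have hg : ∀ k, (g k ++ [(Set.univ : Set Unit)]) <+: g (k + 1) ∧ g (k + 1) ∈ Φ ∧
      (g k).length + 1 < (g (k + 1)).length := fun k => (key (g k)).choose_spec
  have hchain : ∀ k m, k ≤ m → g k <+: g m := by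
    intro k m h
    induction m with
    | zero => rw [Nat.le_zero.mp h]
    | succ m ih =>
      rcases Nat.of_le_succ h with h' | h'
      · exact (ih h').trans
          (((g m).prefix_append [(Set.univ : Set Unit)]).trans (hg m).1)
      · rw [h']
  have hsm : StrictMono (fun k => (g k).length) := by
    apply strictMono_nat_of_lt_succ
    intro k
    have := (hg k).2.2
    omega
  -- the diagonal word
  set ρs : ℕ → Set Unit := fun n => (g (n + 1)).getD n (∅ : Set Unit) with hρs
  have hlenk : ∀ k : ℕ, k ≤ (g k).length := fun k => by
    induction k with
    | zero => exact Nat.zero_le _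
    | succ k ih => have := (hg k).2.2; omega
  have claimA : ∀ k n, n < (g k).length → ρs n = (g k).getD n ∅ := by
    intro k n hn
    have h1 : n < (g (n + 1)).length := lt_of_lt_of_le (Nat.lt_succ_self n) (hlenk (n + 1))
    rcases le_total (n + 1) k with h | h
    · exact ((hchain (n + 1) k h).getD_eq h1 ∅).symm
    · exact (hchain k (n + 1) h).getD_eq hn ∅
  have claimB : ∀ k, wordPrefix ρs (g k).length = g k := by
    intro k
    rw [wordPrefix_congr (fun i hi => claimA k i hi), wordPrefix_of_list]
  have onpos : ∀ k, () ∈ ρs ((g k).length) := by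
    intro k
    have hp : (g k).length < (g (k + 1)).length := by have := (hg k).2.2; omega
    rw [claimA (k + 1) _ hp, (hg k).1.getD_eq (by simp) ∅]
    rw [List.getD_eq_getElem _ _ (by simp)]
    simp
  have h1 : {n | () ∈ ρs n}.Infinite :=
    Set.infinite_of_injective_forall_mem hsm.injective onpos
  have h2 : {n : ℕ | wordPrefix ρs n ∈ Φ}.Infinite := by
    apply Set.infinite_of_injective_forall_mem
      (f := fun k => (g (k + 1)).length)
      (fun a b hab => by
        have h3 : a + 1 = b + 1 := hsm.injective hab
        omega)
    intro k
    rw [Set.mem_setOf_eq, claimB (k + 1)]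
    exact (hg k).2.1
  exact h2 ((hiff ρs).mp h1)

end CausalityAux

section CausalityEx

/-- The example system: states `Bool` (`true` = "failed"), one input, one output. -/
def exT : FinSystem Bool Unit Unit where
  init := false
  tr := fun b A => {b' | (b' = true → () ∉ A) ∧ (b = true → b' = true)}
  lab := fun b => {_u : Unit | b = true}

def exπ : ℕ → Set Unit × Set Unit := fun _ => ((Set.univ : Set Unit), (∅ : Set Unit))

def exE : Set (ℕ → Set Unit × Set Unit) := {σ | {n | () ∈ (σ n).2}.Finite}

def exC : Set (ℕ → Set Unit) := {ρ | {n | () ∈ ρ n}.Infinite}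

lemma exπ_trace : IsTrace exT exπ := by
  refine ⟨fun _ => false, rfl, fun n => ⟨⟨by simp, by simp⟩, ?_⟩⟩
  show (∅ : Set Unit) = {_u : Unit | false = true}
  ext u; simp

lemma exE_persistence : IsPersistenceProperty exE := by
  refine ⟨{w : List (Set Unit × Set Unit) | ∃ a ∈ w.getLast?, () ∈ a.2}, ?_⟩
  ext σ
  have hset : {n : ℕ | wordPrefix σ n ∈
      {w : List (Set Unit × Set Unit) | ∃ a ∈ w.getLast?, () ∈ a.2}}
      = (fun m => m + 1) '' {m | () ∈ (σ m).2} := by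
    ext n
    cases n with
    | zero =>
      simp [wordPrefix]
    | succ m =>
      have hlast : (wordPrefix σ (m + 1)).getLast? = some (σ m) := by
        rw [List.getLast?_eq_getElem?]
        have : (wordPrefix σ (m + 1)).length - 1 = m := by simp [wordPrefix]
        rw [this, wordPrefix_getElem? σ (Nat.lt_succ_self m)]
      constructor
      · rintro ⟨a, ha, ha2⟩
        rw [Option.mem_def, hlast] at ha
        injection ha with ha
        subst ha
        exact ⟨m, ha2, rfl⟩
      · rintro ⟨m', hm', hmm⟩
        have hm'm : m' = m := by
          simp only at hmm
          omega
        rw [hm'm] at hm'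
        exact ⟨σ m, by rw [Option.mem_def, hlast], hm'⟩
  constructor
  · intro h
    show {n : ℕ | _}.Finite
    rw [hset]
    exact h.image _
  · intro h
    rw [Set.mem_setOf_eq, hset] at h
    exact Set.Finite.of_finite_image h (fun a _ b _ hab => by omega)

lemma exSat : SatCond exT exπ exE exC := by
  rintro π' ⟨s', hs0, hstep⟩ hin
  have hin' : ∀ n, (π' n).1 = (Set.univ : Set Unit) := fun n => congrFun hin n
  have hfalse : ∀ n, s' n = false := by
    intro n
    induction n with
    | zero => exact hs0
    | succ n ih =>
      have h1 := (hstep n).1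
      rw [ih] at h1
      obtain ⟨h2, -⟩ := h1
      cases hb : s' (n + 1) with
      | false => rfl
      | true => exact absurd (by rw [hin' n]; trivial) (h2 hb)
  constructor
  · have : {n | () ∈ traceInputs π' n} = Set.univ :=
      Set.eq_univ_of_forall (fun n => by
        show () ∈ (π' n).1
        rw [hin' n]; trivial)
    show {n | () ∈ traceInputs π' n}.Infinite
    rw [this]; exact Set.infinite_univ
  · show {n | () ∈ (π' n).2}.Finite
    have : {n | () ∈ (π' n).2} = ∅ := by
      ext n
      simp only [Set.mem_setOf_eq, Set.mem_empty_iff_false, iff_false]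
      rw [(hstep n).2]
      show ¬ (() ∈ {_u : Unit | s' (n+1) = true})
      simp [hfalse (n+1)]
    rw [this]; exact Set.finite_empty

lemma exCf : CfCond exT exπ exE exC := by
  intro ρ hρ
  have hfin : {n | () ∈ ρ n}.Finite := Set.not_infinite.mp hρ
  obtain ⟨N, hN⟩ := hfin.bddAbove
  have hoff : ∀ n, N < n → () ∉ ρ n := fun n hn h => absurd (hN h) (by omega)
  refine ⟨fun n => (ρ n, {_u : Unit | N + 1 < n + 1}), ⟨fun n => decide (N + 1 < n), by simp [exT], ?_⟩,
    fun n i h => h, ?_⟩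
  · intro n
    constructor
    · constructor
      · intro h1
        rw [decide_eq_true_iff] at h1
        exact hoff n (by omega)
      · intro h2
        rw [decide_eq_true_iff] at h2 ⊢
        omega
    · show {_u : Unit | N + 1 < n + 1} = {_u : Unit | decide (N + 1 < n + 1) = true}
      ext u; simp
  · show ¬ {n | () ∈ ({_u : Unit | N + 1 < n + 1} : Set Unit)}.Finite
    intro h
    have : Set.Ioi (N + 1) ⊆ {n : ℕ | () ∈ ({_u : Unit | N + 1 < n + 1} : Set Unit)} := by
      intro n hn
      show N + 1 < n + 1
      have : N + 1 < n := hn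
      omega
    exact (Set.Ioi_infinite (N + 1)).mono this h

lemma exMin : ¬ ∃ C' : Set (ℕ → Set Unit), C' ⊂ exC ∧ SatCond exT exπ exE C' ∧
    CfCond exT exπ exE C' := by
  rintro ⟨C', hlt, -, hcf⟩
  obtain ⟨ρ0, hρ0C, hρ0C'⟩ := Set.exists_of_ssubset hlt
  obtain ⟨σ, ⟨s, hs0, hstep⟩, hsim, hσE⟩ := hcf ρ0 hρ0C'
  have hout : {n | () ∈ (σ n).2}.Infinite := hσE
  obtain ⟨m, hm⟩ := hout.nonempty
  have hm1 : s (m + 1) = true := by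
    have := (hstep m).2
    rw [Set.mem_setOf_eq, this] at hm
    exact hm
  have htrap : ∀ k, s (m + 1 + k) = true := by
    intro k
    induction k with
    | zero => exact hm1
    | succ k ih =>
      have h1 := (hstep (m + 1 + k)).1
      rw [ih] at h1
      exact h1.2 rfl
  have hoffσ : ∀ n, m + 1 ≤ n → () ∉ (σ n).1 := by
    intro n hn
    have h1 := (hstep n).1
    have h2 : s (n + 1) = true := by
      have : n + 1 = m + 1 + (n - m) := by omega
      rw [this]; exact htrap (n - m)
    exact h1.1 h2
  have hoffρ : ∀ n, m + 1 ≤ n → () ∉ ρ0 n := by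
    intro n hn
    have hne : (() ∈ (σ n).1) ≠ (() ∈ (exπ n).1) :=
      prop_ne_of (show () ∈ (exπ n).1 from trivial) (hoffσ n hn)
    exact not_of_prop_ne (hsim n () hne) trivial
  have : {n | () ∈ ρ0 n}.Finite := by
    apply Set.Finite.subset (Set.finite_Iic m)
    intro n hn
    by_contra hgt
    simp only [Set.mem_Iic, not_le] at hgt
    exact hoffρ n (by omega) hn
  exact hρ0C this

lemma exCause : IsCause exT exπ exE exC := ⟨exSat, exCf, exMin⟩

end CausalityEx

/-- There is a persistence effect whose cause, with respect to the subset similarity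
relation, is not a persistence property. -/
theorem persistence_not_closed_under_causality :
    ∃ (S I O : Type) (_ : Fintype S) (_ : Fintype I) (_ : Fintype O)
      (T : FinSystem S I O) (π : ℕ → Set I × Set O) (_ : IsTrace T π)
      (E : Set (ℕ → Set I × Set O)) (C : Set (ℕ → Set I)),
      IsPersistenceProperty E ∧ IsCause T π E C ∧ ¬ IsPersistenceProperty C := by
  exact ⟨Bool, Unit, Unit, inferInstance, inferInstance, inferInstance, exT, exπ, exπ_trace,
    exE, exC, exE_persistence, exCause, infiniteOn_not_persistence⟩
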